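/- Let Ω = (0,1) with its Borel σ-field and Lebesgue (probability) measure P, and let C = {f ∈ L0+ : E_P[f] = 1}. Then the set of maximal elements of the closure of C equals {f ∈ L0+ : E_P[f] = 1}, which equals the set of maximal elements of C; in particular, C is max-closed. -/

import Mathlib

open MeasureTheory Filter Set

noncomputable section

variable {Ω : Type*} [MeasurableSpace Ω]

/-- The nonnegative orthant `L⁰₊` of the space `L⁰` of (a.e.-equivalence classes of)
random variables over `(Ω, ℱ, P)`. -/
def L0plus (P : Measure Ω) : Set (Ω →ₘ[P] ℝ) := {f | 0 ≤ f}

/-- The metric `(f, g) ↦ E[1 ∧ |f - g|]` inducing the topology of convergence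
in probability on `L⁰`. -/
def dist0 (P : Measure Ω) (f g : Ω →ₘ[P] ℝ) : ℝ :=
  ∫ ω, min 1 |f ω - g ω| ∂P

/-- Convergence in probability of a sequence in `L⁰`. -/
def Tendsto0 (P : Measure Ω) (f : ℕ → Ω →ₘ[P] ℝ) (g : Ω →ₘ[P] ℝ) : Prop :=
  Tendsto (fun n => dist0 P (f n) g) atTop (nhds 0)

/-- Closure of a set in `L⁰` with respect to the topology of convergence in probability. -/
def closure0 (P : Measure Ω) (C : Set (Ω →ₘ[P] ℝ)) : Set (Ω →ₘ[P] ℝ) :=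
  {f | ∀ ε : ℝ, 0 < ε → ∃ g ∈ C, dist0 P f g < ε}

/-- A set of `L⁰` is closed iff it contains its closure. -/
def IsClosed0 (P : Measure Ω) (C : Set (Ω →ₘ[P] ℝ)) : Prop :=
  closure0 P C ⊆ C

/-- Boundedness (in probability) of a set `C ⊆ L⁰₊` : `lim_{ℓ → ∞} sup_{f ∈ C} P[f > ℓ] = 0`. -/
def Bounded0 (P : Measure Ω) (C : Set (Ω →ₘ[P] ℝ)) : Prop :=
  Tendsto (fun ℓ : ℝ => ⨆ f ∈ C, P {ω | ℓ < f ω}) atTop (nhds 0)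

/-- The set `C^max` of maximal elements of `C ⊆ L⁰₊` : `f ∈ C` such that `f ≤ g` a.s.
and `g ∈ C` imply `f = g` a.s. -/
def maxSet (P : Measure Ω) (C : Set (Ω →ₘ[P] ℝ)) : Set (Ω →ₘ[P] ℝ) :=
  {f | f ∈ C ∧ ∀ g ∈ C, f ≤ g → f = g}

/-- `C` is max-closed if every maximal element of its closure already belongs to `C`. -/
def MaxClosed (P : Measure Ω) (C : Set (Ω →ₘ[P] ℝ)) : Prop :=
  maxSet P (closure0 P C) ⊆ C

/-- The pairing `⟨μ, f⟩ = ∫ f dμ ∈ [0, ∞]` between a nonnegative measure `μ` and `f ∈ L⁰₊`. -/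
def pairing {P : Measure Ω} (μ : Measure Ω) (f : Ω →ₘ[P] ℝ) : ENNReal :=
  ∫⁻ ω, ENNReal.ofReal (f ω) ∂μ

/-- The set `C^osp` of outer support points of `C ⊆ L⁰₊`: points `g ∈ C^max` for which there
is a σ-finite nonnegative measure `μ ≪ P` with `0 < sup_{f ∈ C} ⟨μ, f⟩ = ⟨μ, g⟩ < ∞`;
by convention `{0}^osp = {0}`. -/
def osp (P : Measure Ω) (C : Set (Ω →ₘ[P] ℝ)) : Set (Ω →ₘ[P] ℝ) :=
  {g | g ∈ maxSet P C ∧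
    (C = {0} ∨ ∃ μ : Measure Ω, μ ≪ P ∧ SigmaFinite μ ∧
      0 < pairing μ g ∧ pairing μ g < ⊤ ∧ (⨆ f ∈ C, pairing μ f) = pairing μ g)}

/-- The solid hull of `C ⊆ L⁰₊`. -/
def solidHull (P : Measure Ω) (C : Set (Ω →ₘ[P] ℝ)) : Set (Ω →ₘ[P] ℝ) :=
  {f | f ∈ L0plus P ∧ ∃ g ∈ C, f ≤ g}

/-- A set `S ⊆ L⁰₊` is solid if `g ∈ S` and `0 ≤ f ≤ g` imply `f ∈ S`. -/
def Solid (P : Measure Ω) (S : Set (Ω →ₘ[P] ℝ)) : Prop :=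
  ∀ g ∈ S, ∀ f : Ω →ₘ[P] ℝ, 0 ≤ f → f ≤ g → f ∈ S

/-- `(g n)` is a sequence of forward convex combinations of `(f n)`. -/
def ForwardConvexComb (P : Measure Ω) (f g : ℕ → Ω →ₘ[P] ℝ) : Prop :=
  ∀ n : ℕ, g n ∈ convexHull ℝ (f '' Set.Ici n)

end

noncomputable section

/-- The probability space `Ω = (0,1)` with its Borel σ-field and Lebesgue measure. -/
abbrev Omega01 : Type := Set.Ioo (0:ℝ) 1

/-- Lebesgue measure on `(0,1)`, a probability measure. -/
noncomputable def P01 : Measure Omega01 :=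
  (volume : Measure ℝ).comap Subtype.val

/-- The set `C = {f ∈ L⁰₊ : E_P[f] = 1}`. -/
noncomputable def C01 : Set (Omega01 →ₘ[P01] ℝ) :=
  {f | f ∈ L0plus P01 ∧ ∫⁻ ω, ENNReal.ofReal (f ω) ∂P01 = 1}

end

/-!
Every element of the closure of `C` is nonnegative with expectation at most `1`: convergence
for `E[1 ∧ |f - g|]` is convergence in measure, hence a.s. convergence along a subsequence, and
Fatou's lemma bounds the expectation of the limit. A nonnegative `f` with `E f ≤ 1` lies below
`f + (1 - E f) ∈ C`, so a maximal element of the closure belongs to `C`. Conversely, if `f ∈ C`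
and `f ≤ g` with `E g ≤ 1`, then `g - f ≥ 0` has expectation `0`, so `f = g`.
-/

open Topology

section

variable {Ω : Type*} [MeasurableSpace Ω] {P : Measure Ω}

def probDensities (P : Measure Ω) : Set (Ω →ₘ[P] ℝ) :=
  {f | f ∈ L0plus P ∧ ∫⁻ ω, ENNReal.ofReal (f ω) ∂P = 1}

lemma MeasureTheory.AEEqFun.nonneg_iff {f : Ω →ₘ[P] ℝ} :
    0 ≤ f ↔ ∀ᵐ ω ∂P, 0 ≤ f ω := by
  rw [← AEEqFun.coeFn_le]
  exact eventuallyLE_congr (AEEqFun.coeFn_zero (μ := P) (β := ℝ)) EventuallyEq.rfl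

lemma dist0_comm (f g : Ω →ₘ[P] ℝ) : dist0 P f g = dist0 P g f := by
  simp only [dist0, abs_sub_comm]

lemma dist0_nonneg (f g : Ω →ₘ[P] ℝ) : 0 ≤ dist0 P f g :=
  integral_nonneg fun _ => by positivity

lemma dist0_self (f : Ω →ₘ[P] ℝ) : dist0 P f f = 0 := by
  simp [dist0]

lemma subset_closure0 (C : Set (Ω →ₘ[P] ℝ)) : C ⊆ closure0 P C :=
  fun f hf _ hε => ⟨f, hf, by rwa [dist0_self]⟩

lemma integrable_min_one_abs_sub [IsFiniteMeasure P] (f g : Ω →ₘ[P] ℝ) :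
    Integrable (fun ω => min 1 |f ω - g ω|) P := by
  refine (integrable_const (1 : ℝ)).mono' ?_ (ae_of_all _ fun ω => ?_)
  · exact (aemeasurable_const.min
      (f.aemeasurable.sub g.aemeasurable).norm).aestronglyMeasurable
  · rw [Real.norm_of_nonneg (by positivity)]
    exact min_le_left _ _

theorem tendstoInMeasure_of_tendsto0 [IsFiniteMeasure P] {f : ℕ → Ω →ₘ[P] ℝ}
    {g : Ω →ₘ[P] ℝ} (hfg : Tendsto0 P f g) :
    TendstoInMeasure P (fun n => f n) atTop g := by
  rw [tendstoInMeasure_iff_measureReal_dist]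
  intro ε hε
  have hδ : 0 < min 1 ε := lt_min one_pos hε
  have markov :
      ∀ n, P.real {ω | ε ≤ dist (f n ω) (g ω)} ≤ dist0 P (f n) g / min 1 ε := by
    intro n
    rw [le_div_iff₀' hδ]
    refine le_trans ?_ (mul_meas_ge_le_integral_of_nonneg (ae_of_all _ fun _ => by positivity)
      (integrable_min_one_abs_sub (f n) g) (min 1 ε))
    refine mul_le_mul_of_nonneg_left (measureReal_mono fun ω hω => ?_) hδ.le
    exact min_le_min le_rfl (hω.trans_eq (Real.dist_eq _ _))
  exact squeeze_zero (fun _ => measureReal_nonneg) markov (by simpa using hfg.div_const _)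

theorem exists_seq_tendsto_ae_of_mem_closure0 [IsFiniteMeasure P] {C : Set (Ω →ₘ[P] ℝ)}
    {g : Ω →ₘ[P] ℝ} (hg : g ∈ closure0 P C) :
    ∃ h : ℕ → Ω →ₘ[P] ℝ, (∀ n, h n ∈ C) ∧
      ∀ᵐ ω ∂P, Tendsto (fun n => h n ω) atTop (𝓝 (g ω)) := by
  choose h hC hdist using fun n : ℕ => hg (1 / (n + 1)) Nat.one_div_pos_of_nat
  have hlim : Tendsto0 P h g :=
    squeeze_zero (fun _ => dist0_nonneg _ _) (fun n => (dist0_comm g (h n) ▸ hdist n).le)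
      tendsto_one_div_add_atTop_nhds_zero_nat
  obtain ⟨ns, -, hae⟩ := (tendstoInMeasure_of_tendsto0 hlim).exists_seq_tendsto_ae
  exact ⟨h ∘ ns, fun n => hC (ns n), hae⟩

theorem closure0_subset_L0plus [IsFiniteMeasure P] {C : Set (Ω →ₘ[P] ℝ)}
    (hC : C ⊆ L0plus P) : closure0 P C ⊆ L0plus P := by
  intro g hg
  obtain ⟨h, hC', hae⟩ := exists_seq_tendsto_ae_of_mem_closure0 hg
  have hpos : ∀ᵐ ω ∂P, ∀ n, 0 ≤ h n ω :=
    ae_all_iff.2 fun n => AEEqFun.nonneg_iff.1 (hC (hC' n))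
  refine AEEqFun.nonneg_iff.2 ?_
  filter_upwards [hae, hpos] with ω hω hω'
  exact ge_of_tendsto' hω hω'

theorem lintegral_ofReal_le_of_mem_closure0 [IsFiniteMeasure P] {C : Set (Ω →ₘ[P] ℝ)}
    {c : ENNReal} (hC : ∀ h ∈ C, ∫⁻ ω, ENNReal.ofReal (h ω) ∂P ≤ c) {g : Ω →ₘ[P] ℝ}
    (hg : g ∈ closure0 P C) : ∫⁻ ω, ENNReal.ofReal (g ω) ∂P ≤ c := by
  obtain ⟨h, hC', hae⟩ := exists_seq_tendsto_ae_of_mem_closure0 hg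
  calc ∫⁻ ω, ENNReal.ofReal (g ω) ∂P
      = ∫⁻ ω, liminf (fun n => ENNReal.ofReal (h n ω)) atTop ∂P := by
        refine lintegral_congr_ae ?_
        filter_upwards [hae] with ω hω
        exact ((ENNReal.continuous_ofReal.tendsto _).comp hω).liminf_eq.symm
    _ ≤ liminf (fun n => ∫⁻ ω, ENNReal.ofReal (h n ω) ∂P) atTop :=
        lintegral_liminf_le' fun n => (h n).aemeasurable.ennreal_ofReal
    _ ≤ c := liminf_le_of_frequently_le' (Frequently.of_forall fun n => hC _ (hC' n))

theorem MeasureTheory.AEEqFun.eq_of_le_of_lintegral_ofReal_le {f g : Ω →ₘ[P] ℝ}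
    (hf : 0 ≤ f) (hfg : f ≤ g) (hf_fin : ∫⁻ ω, ENNReal.ofReal (f ω) ∂P ≠ ⊤)
    (hgf : ∫⁻ ω, ENNReal.ofReal (g ω) ∂P ≤ ∫⁻ ω, ENNReal.ofReal (f ω) ∂P) : f = g := by
  have hle := AEEqFun.coeFn_le.2 hfg
  have hofReal :=
    ae_eq_of_ae_le_of_lintegral_le (hle.mono fun _ => ENNReal.ofReal_le_ofReal) hf_fin
      g.aemeasurable.ennreal_ofReal hgf
  refine AEEqFun.ext ?_
  filter_upwards [hofReal, hle, AEEqFun.nonneg_iff.1 hf] with ω hω hω' hω0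
  exact (ENNReal.ofReal_eq_ofReal_iff hω0 (hω0.trans hω')).1 hω

theorem eq_of_mem_probDensities_of_le {f g : Ω →ₘ[P] ℝ} (hf : f ∈ probDensities P)
    (hfg : f ≤ g) (hg : ∫⁻ ω, ENNReal.ofReal (g ω) ∂P ≤ 1) : f = g :=
  AEEqFun.eq_of_le_of_lintegral_ofReal_le hf.1 hfg (by rw [hf.2]; exact ENNReal.one_ne_top)
    (hf.2 ▸ hg)

theorem exists_mem_probDensities_le [IsProbabilityMeasure P] {f : Ω →ₘ[P] ℝ} (hf : 0 ≤ f)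
    (hf1 : ∫⁻ ω, ENNReal.ofReal (f ω) ∂P ≤ 1) : ∃ g ∈ probDensities P, f ≤ g := by
  set c := (1 - ∫⁻ ω, ENNReal.ofReal (f ω) ∂P).toReal
  have hc : 0 ≤ c := ENNReal.toReal_nonneg
  set g : Ω →ₘ[P] ℝ := f + AEEqFun.const Ω c
  have hg : ∀ᵐ ω ∂P, g ω = f ω + c := by
    filter_upwards [AEEqFun.coeFn_add f (AEEqFun.const Ω c), AEEqFun.coeFn_const Ω c (μ := P)]
      with ω h1 h2
    rw [h1, Pi.add_apply, h2, Function.const_apply]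
  have hf0 := AEEqFun.nonneg_iff.1 hf
  refine ⟨g, ⟨AEEqFun.nonneg_iff.2 ?_, ?_⟩, AEEqFun.coeFn_le.1 ?_⟩
  · filter_upwards [hg, hf0] with ω h1 h2
    rw [h1]; positivity
  · calc ∫⁻ ω, ENNReal.ofReal (g ω) ∂P
        = ∫⁻ ω, (ENNReal.ofReal (f ω) + ENNReal.ofReal c) ∂P := by
          refine lintegral_congr_ae ?_
          filter_upwards [hg, hf0] with ω h1 h2
          rw [h1, ENNReal.ofReal_add h2 hc]
      _ = 1 := by
          rw [lintegral_add_right _ measurable_const, lintegral_const, measure_univ, mul_one,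
            ENNReal.ofReal_toReal (ENNReal.sub_ne_top ENNReal.one_ne_top),
            add_tsub_cancel_of_le hf1]
  · filter_upwards [hg] with ω h1
    rw [h1]; linarith

theorem maxSet_probDensities : maxSet P (probDensities P) = probDensities P :=
  Subset.antisymm (fun _ hf => hf.1) fun _ hf =>
    ⟨hf, fun _ hg hfg => eq_of_mem_probDensities_of_le hf hfg hg.2.le⟩

theorem maxSet_closure0_probDensities [IsProbabilityMeasure P] :
    maxSet P (closure0 P (probDensities P)) = probDensities P := by
  have hle_one : ∀ g ∈ closure0 P (probDensities P), ∫⁻ ω, ENNReal.ofReal (g ω) ∂P ≤ 1 :=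
    fun _ => lintegral_ofReal_le_of_mem_closure0 fun _ hh => hh.2.le
  refine Subset.antisymm ?_ fun f hf => ⟨subset_closure0 _ hf, fun g hg hfg =>
    eq_of_mem_probDensities_of_le hf hfg (hle_one g hg)⟩
  rintro f ⟨hf, hmax⟩
  obtain ⟨g, hg, hfg⟩ := exists_mem_probDensities_le
    (closure0_subset_L0plus (fun _ hh => hh.1) hf) (hle_one f hf)
  rwa [hmax g (subset_closure0 _ hg) hfg]

end

instance : IsProbabilityMeasure P01 := by
  constructor
  rw [P01, (MeasurableEmbedding.subtype_coe measurableSet_Ioo).comap_apply, image_univ,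
    Subtype.range_coe, Real.volume_Ioo]
  norm_num

/-- On `Ω = (0,1)` with Lebesgue measure `P`, for
`C = {f ∈ L⁰₊ : E_P[f] = 1}`, the set of maximal elements of the closure of `C` equals
`{f ∈ L⁰₊ : E_P[f] = 1}`, which equals the set of maximal elements of `C`; in particular,
`C` is max-closed. -/
theorem statement12 :
    maxSet P01 (closure0 P01 C01) = C01 ∧ maxSet P01 C01 = C01 ∧ MaxClosed P01 C01 :=
  ⟨maxSet_closure0_probDensities, maxSet_probDensities,
    maxSet_closure0_probDensities.subset⟩
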